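/- arXiv:1508.00389 — 2 statements merged into one kernel-verified Lean document; each statement's English description precedes it below -/
import Mathlib

section
/- Let A and B be C*-algebras and let φ : A → B be a completely positive map that factors through a matrix algebra Mₙ(ℂ) via completely positive maps. Then for any a₁,…,aₙ ∈ A and b₁,…,bₙ ∈ B, the map a ↦ Σᵢⱼ bᵢ* φ(aᵢ* a aⱼ) bⱼ is completely positive and also factors through a matrix algebra via completely positive maps. -/
/-!
A CP sum for `Ψ = ∑ᵢⱼ bᵢ⋆ φ(aᵢ⋆ · aⱼ) bⱼ` with data `(xₚ, cₚ)` is the CP sum for `φ` with data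
`(xₚ aᵢ, bᵢ cₚ)`, so `Ψ` is completely positive. If `φ = χ ∘ ψ` through `Mₖ`, then `Ψ` factors
through `Mₙ(Mₖ) ≅ Mₙₖ` as `x ↦ [ψ(aᵢ⋆ x aⱼ)]ᵢⱼ` followed by `M ↦ ∑ᵢⱼ bᵢ⋆ χ(Mᵢⱼ) bⱼ`. The first
map is completely positive because its quadratic forms are quadratic forms of `ψ` on vectors
cut out of the blocks, and the second because the `(i, j)` block of `Mₚ⋆ M_q` is
`∑ᵣ (Mₚ)ᵣᵢ⋆ (M_q)ᵣⱼ`.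
-/

noncomputable section

open Filter Topology TopologicalSpace

/-- An element of the form `y⋆y`; in a C⋆-algebra this characterises positivity. -/
def IsPosElem {A : Type*} [Mul A] [Star A] (x : A) : Prop := ∃ y : A, x = star y * y

/-- A linear map between (not necessarily unital) complex ⋆-algebras is completely positive iff
all matrix combinations `∑ᵢⱼ bᵢ⋆ φ(aᵢ⋆ aⱼ) bⱼ` are positive. -/
def IsCPMap {A B : Type*} [NonUnitalRing A] [StarRing A] [Module ℂ A]
    [NonUnitalRing B] [StarRing B] [Module ℂ B] (φ : A →ₗ[ℂ] B) : Prop :=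
  ∀ (n : ℕ) (a : Fin n → A) (b : Fin n → B),
    IsPosElem (∑ i, ∑ j, star (b i) * φ (star (a i) * a j) * b j)

/-- A completely positive map is factorable if it factors through a matrix algebra by
completely positive maps. -/
def IsFactorable {A B : Type*} [NonUnitalRing A] [StarRing A] [Module ℂ A]
    [NonUnitalRing B] [StarRing B] [Module ℂ B] (φ : A →ₗ[ℂ] B) : Prop :=
  ∃ (k : ℕ) (ψ : A →ₗ[ℂ] Matrix (Fin k) (Fin k) ℂ) (χ : Matrix (Fin k) (Fin k) ℂ →ₗ[ℂ] B),
    IsCPMap ψ ∧ IsCPMap χ ∧ φ = χ ∘ₗ ψ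

/-- A map is nuclear if it is a point-norm limit of factorable completely positive maps. -/
def IsNuclearMap {A B : Type*} [NonUnitalNormedRing A] [StarRing A] [Module ℂ A]
    [NonUnitalNormedRing B] [StarRing B] [Module ℂ B] (φ : A →ₗ[ℂ] B) : Prop :=
  ∀ ε : ℝ, 0 < ε → ∀ s : Finset A, ∃ ψ : A →ₗ[ℂ] B,
    IsFactorable ψ ∧ ∀ a ∈ s, ‖φ a - ψ a‖ < ε

/-- A closed two-sided ideal of a normed complex algebra. -/
structure ClosedIdeal (A : Type*) [NonUnitalNormedRing A] [Module ℂ A] where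
  carrier : Set A
  zero_mem' : (0 : A) ∈ carrier
  add_mem' : ∀ {x y : A}, x ∈ carrier → y ∈ carrier → x + y ∈ carrier
  smul_mem' : ∀ (c : ℂ) {x : A}, x ∈ carrier → c • x ∈ carrier
  mul_mem_left' : ∀ (a : A) {x : A}, x ∈ carrier → a * x ∈ carrier
  mul_mem_right' : ∀ (a : A) {x : A}, x ∈ carrier → x * a ∈ carrier
  isClosed' : IsClosed carrier

instance {A : Type*} [NonUnitalNormedRing A] [Module ℂ A] : SetLike (ClosedIdeal A) A where
  coe := ClosedIdeal.carrier
  coe_injective := by intro S T h; cases S; cases T; congr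

/-- The smallest closed two-sided ideal containing a given set. -/
def ClosedIdeal.generated {A : Type*} [NonUnitalNormedRing A] [Module ℂ A] (S : Set A) :
    ClosedIdeal A where
  carrier := ⋂ (I : ClosedIdeal A) (_ : S ⊆ I.carrier), I.carrier
  zero_mem' := by simp only [Set.mem_iInter]; exact fun I _ => I.zero_mem'
  add_mem' := by
    intro x y hx hy
    simp only [Set.mem_iInter] at hx hy ⊢
    exact fun I hI => I.add_mem' (hx I hI) (hy I hI)
  smul_mem' := by
    intro c x hx
    simp only [Set.mem_iInter] at hx ⊢
    exact fun I hI => I.smul_mem' c (hx I hI)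
  mul_mem_left' := by
    intro a x hx
    simp only [Set.mem_iInter] at hx ⊢
    exact fun I hI => I.mul_mem_left' a (hx I hI)
  mul_mem_right' := by
    intro a x hx
    simp only [Set.mem_iInter] at hx ⊢
    exact fun I hI => I.mul_mem_right' a (hx I hI)
  isClosed' := isClosed_iInter fun I => isClosed_iInter fun _ => I.isClosed'

/-- A C⋆-algebra is exact if it admits a faithful nuclear representation on a Hilbert space. -/
def IsExactCStarAlgebra (A : Type u) [NonUnitalCStarAlgebra A] : Prop :=
  ∃ (H : Type u) (_ : NormedAddCommGroup H) (_ : InnerProductSpace ℂ H) (_ : CompleteSpace H)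
    (π : A →ₗ[ℂ] (H →L[ℂ] H)),
    (∀ x y, π (x * y) = π x * π y) ∧ (∀ x, π (star x) = star (π x)) ∧
      Function.Injective π ∧ IsNuclearMap π

/-- A C⋆-algebra is σ-unital if it contains a strictly positive element. -/
def IsSigmaUnital (A : Type*) [NonUnitalNormedRing A] [StarRing A] [Module ℂ A] : Prop :=
  ∃ h : A, IsPosElem h ∧ ∀ a : A, a ∈ closure {x : A | ∃ b : A, x = h * b}

/-- A realisation of the spatial tensor product of two C⋆-algebras: a C⋆-algebra `T` together
with a bilinear map `ι` with dense linear span, multiplicative and ⋆-preserving on elementary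
tensors, and admitting slice maps in both variables. -/
structure CStarTensor (B D T : Type*) [NonUnitalCStarAlgebra B] [NonUnitalCStarAlgebra D]
    [NonUnitalCStarAlgebra T] where
  ι : B →ₗ[ℂ] D →ₗ[ℂ] T
  ι_mul : ∀ (b b' : B) (d d' : D), ι b d * ι b' d' = ι (b * b') (d * d')
  ι_star : ∀ (b : B) (d : D), star (ι b d) = ι (star b) (star d)
  denseSpan : Dense (Submodule.span ℂ {t : T | ∃ b d, t = ι b d} : Set T)
  sliceR : (D →L[ℂ] ℂ) → (T →L[ℂ] B)
  sliceR_apply : ∀ (η : D →L[ℂ] ℂ) (b : B) (d : D), sliceR η (ι b d) = η d • b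
  sliceL : (B →L[ℂ] ℂ) → (T →L[ℂ] D)
  sliceL_apply : ∀ (f : B →L[ℂ] ℂ) (b : B) (d : D), sliceL f (ι b d) = f b • d

/-- The ideal `J ⊗ D` of the tensor product: the closed two-sided ideal generated by elementary
tensors with first factor in `J`. -/
def CStarTensor.tensorIdeal {B D T : Type*} [NonUnitalCStarAlgebra B] [NonUnitalCStarAlgebra D]
    [NonUnitalCStarAlgebra T] (τ : CStarTensor B D T) (J : ClosedIdeal B) : ClosedIdeal T :=
  ClosedIdeal.generated {t : T | ∃ b ∈ J.carrier, ∃ d : D, t = τ.ι b d}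

open Matrix
open scoped ComplexOrder

theorem Matrix.posSemidef_of_forall_dotProduct_mulVec_nonneg {n : Type*} [Fintype n]
    {M : Matrix n n ℂ} (h : ∀ x, 0 ≤ star x ⬝ᵥ (M *ᵥ x)) : M.PosSemidef := by
  classical
  rw [← isPositive_toEuclideanLin_iff, LinearMap.isPositive_iff_complex]
  intro x
  have hx := h x.ofLp
  have hstar : x.ofLp ⬝ᵥ star (M *ᵥ x.ofLp) = star (star x.ofLp ⬝ᵥ (M *ᵥ x.ofLp)) := by
    rw [star_dotProduct, star_star, dotProduct_comm]
  rw [EuclideanSpace.inner_eq_star_dotProduct]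
  simp only [toLpLin_apply, WithLp.ofLp_toLp, hstar, (IsSelfAdjoint.of_nonneg hx).star_eq]
  exact ⟨Complex.ext rfl (Complex.nonneg_iff.mp hx).2, (Complex.nonneg_iff.mp hx).1⟩

theorem Matrix.isPosElem_iff_posSemidef {n : Type*} [Fintype n] (M : Matrix n n ℂ) :
    IsPosElem M ↔ M.PosSemidef := by
  classical
  open scoped MatrixOrder in
  exact CStarAlgebra.nonneg_iff_eq_star_mul_self.symm.trans nonneg_iff_posSemidef

theorem Matrix.dotProduct_mulVec_eq_sum_submatrix {ι κ α : Type*} [Fintype ι] [Fintype κ]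
    [NonUnitalNonAssocSemiring α] (v w : ι × κ → α) (M : Matrix (ι × κ) (ι × κ) α) :
    v ⬝ᵥ (M *ᵥ w) = ∑ i, ∑ j,
      (fun s => v (i, s)) ⬝ᵥ (M.submatrix (Prod.mk i) (Prod.mk j) *ᵥ fun t => w (j, t)) := by
  simp only [dotProduct, mulVec, submatrix_apply, Fintype.sum_prod_type, Finset.mul_sum]
  exact Finset.sum_congr rfl fun i _ => Finset.sum_comm

theorem Matrix.submatrix_prodMk_mul {ι κ α : Type*} [Fintype ι] [Fintype κ]
    [NonUnitalNonAssocSemiring α] (X Y : Matrix (ι × κ) (ι × κ) α) (i j : ι) :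
    (X * Y).submatrix (Prod.mk i) (Prod.mk j)
      = ∑ r, X.submatrix (Prod.mk i) (Prod.mk r) * Y.submatrix (Prod.mk r) (Prod.mk j) := by
  ext s t
  simp [mul_apply, Matrix.sum_apply, Fintype.sum_prod_type]

theorem Matrix.star_dotProduct_conjTranspose_mul_mul_mulVec {m n α : Type*} [Fintype m]
    [Fintype n] [CommSemiring α] [StarRing α] (X : Matrix m m α) (P Q : Matrix m n α)
    (v : n → α) :
    star v ⬝ᵥ ((Pᴴ * X * Q) *ᵥ v) = star (P *ᵥ v) ⬝ᵥ (X *ᵥ (Q *ᵥ v)) := by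
  rw [← mulVec_mulVec, ← mulVec_mulVec, dotProduct_mulVec, ← star_mulVec]

section CStarAlgebra

variable {B : Type*} [NonUnitalCStarAlgebra B]

theorem isPosElem_iff_nonneg [PartialOrder B] [StarOrderedRing B] {x : B} :
    IsPosElem x ↔ 0 ≤ x :=
  CStarAlgebra.nonneg_iff_eq_star_mul_self.symm

theorem IsPosElem.add {x y : B} (hx : IsPosElem x) (hy : IsPosElem y) : IsPosElem (x + y) := by
  let := CStarAlgebra.spectralOrder B
  have := CStarAlgebra.spectralOrderedRing B
  rw [isPosElem_iff_nonneg] at hx hy ⊢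
  exact add_nonneg hx hy

theorem IsPosElem.sum {ι : Type*} (s : Finset ι) {f : ι → B} (h : ∀ i ∈ s, IsPosElem (f i)) :
    IsPosElem (∑ i ∈ s, f i) :=
  Finset.sum_induction f IsPosElem (fun _ _ => IsPosElem.add) ⟨0, by simp⟩ h

end CStarAlgebra

namespace IsCPMap

variable {A B C : Type*} [NonUnitalRing A] [StarRing A] [Module ℂ A]
  [NonUnitalRing B] [StarRing B] [Module ℂ B] [NonUnitalRing C] [StarRing C] [Module ℂ C]

theorem isPosElem_sum {φ : A →ₗ[ℂ] B} (hφ : IsCPMap φ) {ι : Type*} [Fintype ι]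
    (a : ι → A) (b : ι → B) : IsPosElem (∑ i, ∑ j, star (b i) * φ (star (a i) * a j) * b j) := by
  let e := (Fintype.equivFin ι).symm
  convert hφ _ (a ∘ e) (b ∘ e) using 1
  exact (Fintype.sum_equiv e _ _ fun i =>
    Fintype.sum_equiv e _ (fun j => star (b (e i)) * φ (star (a (e i)) * a j) * b j)
      fun _ => rfl).symm

theorem sandwich {φ : A →ₗ[ℂ] B} (hφ : IsCPMap φ) {ι : Type*} [Fintype ι] (a : ι → A)
    (b : ι → B) {Ψ : A →ₗ[ℂ] B}
    (hΨ : ∀ x, Ψ x = ∑ i, ∑ j, star (b i) * φ (star (a i) * x * a j) * b j) :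
    IsCPMap Ψ := by
  intro m x c
  have key : ∑ p, ∑ q, star (c p) * Ψ (star (x p) * x q) * c q
      = ∑ pi : Fin m × ι, ∑ qj : Fin m × ι, star (b pi.2 * c pi.1) *
          φ (star (x pi.1 * a pi.2) * (x qj.1 * a qj.2)) * (b qj.2 * c qj.1) := by
    simp only [hΨ, Fintype.sum_prod_type, Finset.mul_sum, Finset.sum_mul, star_mul, mul_assoc]
    exact Finset.sum_congr rfl fun p _ => Finset.sum_comm
  rw [key]
  exact hφ.isPosElem_sum _ _

theorem comp_starHom {χ : A →ₗ[ℂ] B} (hχ : IsCPMap χ) {F : Type*} [FunLike F C A]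
    [NonUnitalAlgHomClass F ℂ C A] [StarHomClass F C A] (f : F) :
    IsCPMap (χ ∘ₗ (f : C →ₗ[ℂ] A)) := by
  intro n x c
  simpa [map_mul, map_star] using hχ n (f ∘ x) c

theorem starAlgEquiv_comp {φ : A →ₗ[ℂ] B} (hφ : IsCPMap φ) (e : B ≃⋆ₐ[ℂ] C) :
    IsCPMap ((e : B →ₗ[ℂ] C) ∘ₗ φ) := by
  intro n x c
  obtain ⟨y, hy⟩ := hφ n x (e.symm ∘ c)
  refine ⟨e y, ?_⟩
  simpa [map_sum, map_mul, map_star] using congrArg e hy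

theorem sum_dotProduct_mulVec_nonneg {κ : Type*} [Fintype κ] {ψ : A →ₗ[ℂ] Matrix κ κ ℂ}
    (hψ : IsCPMap ψ) {ι : Type*} [Fintype ι] (y : ι → A) (u : ι → κ → ℂ) :
    0 ≤ ∑ i, ∑ j, star (u i) ⬝ᵥ (ψ (star (y i) * y j) *ᵥ u j) := by
  classical
  cases isEmpty_or_nonempty κ with
  | inl _ => simp [dotProduct]
  | inr h =>
    obtain ⟨t₀⟩ := h
    -- The CP condition has square coefficients, so realise `u i` as the `t₀`-th column of `E i`.
    let E : ι → Matrix κ κ ℂ := fun i => vecMulVec (u i) (Pi.single t₀ 1)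
    have hE : ∀ i, E i *ᵥ Pi.single t₀ 1 = u i := fun i => by ext s; simp [E, vecMulVec_apply]
    have hS := ((Matrix.isPosElem_iff_posSemidef _).mp (hψ.isPosElem_sum y E)
      ).dotProduct_mulVec_nonneg (Pi.single t₀ 1)
    simpa only [sum_mulVec, dotProduct_sum, star_eq_conjTranspose,
      star_dotProduct_conjTranspose_mul_mul_mulVec, hE] using hS

end IsCPMap

section BlockMaps

variable {A B ι κ : Type*}

def blockMatrixMap [NonUnitalRing A] [StarRing A] [Module ℂ A] [IsScalarTower ℂ A A]
    [SMulCommClass ℂ A A] (ψ : A →ₗ[ℂ] Matrix κ κ ℂ) (a : ι → A) :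
    A →ₗ[ℂ] Matrix (ι × κ) (ι × κ) ℂ where
  toFun x := Matrix.of fun p q => ψ (star (a p.1) * x * a q.1) p.2 q.2
  map_add' x y := by ext; simp [mul_add, add_mul]
  map_smul' c x := by ext; simp [mul_smul_comm, smul_mul_assoc]

theorem blockMatrixMap_submatrix [NonUnitalRing A] [StarRing A] [Module ℂ A]
    [IsScalarTower ℂ A A] [SMulCommClass ℂ A A] (ψ : A →ₗ[ℂ] Matrix κ κ ℂ) (a : ι → A)
    (x : A) (i j : ι) :
    (blockMatrixMap ψ a x).submatrix (Prod.mk i) (Prod.mk j) = ψ (star (a i) * x * a j) :=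
  rfl

def blockSumMap [Fintype ι] [NonUnitalRing B] [StarRing B] [Module ℂ B] [IsScalarTower ℂ B B]
    [SMulCommClass ℂ B B] (χ : Matrix κ κ ℂ →ₗ[ℂ] B) (b : ι → B) :
    Matrix (ι × κ) (ι × κ) ℂ →ₗ[ℂ] B where
  toFun M := ∑ i, ∑ j, star (b i) * χ (M.submatrix (Prod.mk i) (Prod.mk j)) * b j
  map_add' M N := by simp [submatrix_add, mul_add, add_mul, Finset.sum_add_distrib]
  map_smul' c M := by simp [submatrix_smul, Finset.smul_sum, mul_smul_comm, smul_mul_assoc]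

variable [Fintype ι] [Fintype κ]

theorem isCPMap_blockMatrixMap [NonUnitalRing A] [StarRing A] [Module ℂ A]
    [IsScalarTower ℂ A A] [SMulCommClass ℂ A A] {ψ : A →ₗ[ℂ] Matrix κ κ ℂ} (hψ : IsCPMap ψ)
    (a : ι → A) : IsCPMap (blockMatrixMap ψ a) := by
  intro m x C
  rw [Matrix.isPosElem_iff_posSemidef]
  refine posSemidef_of_forall_dotProduct_mulVec_nonneg fun v => ?_
  let u : Fin m × ι → κ → ℂ := fun pi s => (C pi.1 *ᵥ v) (pi.2, s)
  have key :
      star v ⬝ᵥ ((∑ p, ∑ q, star (C p) * blockMatrixMap ψ a (star (x p) * x q) * C q) *ᵥ v)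
      = ∑ pi : Fin m × ι, ∑ qj : Fin m × ι,
          star (u pi) ⬝ᵥ (ψ (star (x pi.1 * a pi.2) * (x qj.1 * a qj.2)) *ᵥ u qj) := by
    simp only [sum_mulVec, dotProduct_sum, star_eq_conjTranspose,
      star_dotProduct_conjTranspose_mul_mul_mulVec, dotProduct_mulVec_eq_sum_submatrix,
      blockMatrixMap_submatrix, Fintype.sum_prod_type]
    simp only [star_mul, mul_assoc]
    exact Finset.sum_congr rfl fun p _ => Finset.sum_comm
  rw [key]
  exact hψ.sum_dotProduct_mulVec_nonneg _ _

theorem isCPMap_blockSumMap [NonUnitalCStarAlgebra B] {χ : Matrix κ κ ℂ →ₗ[ℂ] B}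
    (hχ : IsCPMap χ) (b : ι → B) : IsCPMap (blockSumMap χ b) := by
  intro m M c
  let g : ι → Fin m × ι → Matrix κ κ ℂ :=
    fun r pi => (M pi.1).submatrix (Prod.mk r) (Prod.mk pi.2)
  have key : ∑ p, ∑ q, star (c p) * blockSumMap χ b (star (M p) * M q) * c q
      = ∑ r, ∑ pi : Fin m × ι, ∑ qj : Fin m × ι,
          star (b pi.2 * c pi.1) * χ (star (g r pi) * g r qj) * (b qj.2 * c qj.1) := by
    simp only [blockSumMap, LinearMap.coe_mk, AddHom.coe_mk, submatrix_prodMk_mul,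
      star_eq_conjTranspose, ← conjTranspose_submatrix, map_sum, Finset.mul_sum,
      Finset.sum_mul, Fintype.sum_prod_type]
    simp only [← star_eq_conjTranspose, star_mul, mul_assoc, g]
    symm
    rw [Finset.sum_comm]
    refine Finset.sum_congr rfl fun p _ => ?_
    rw [Finset.sum_comm]
    conv_rhs => rw [Finset.sum_comm]
    refine Finset.sum_congr rfl fun i _ => ?_
    rw [Finset.sum_comm]
    exact Finset.sum_congr rfl fun q _ => Finset.sum_comm
  rw [key]
  exact IsPosElem.sum _ fun r _ => hχ.isPosElem_sum _ _

end BlockMaps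

theorem isFactorable_comp {A B ι : Type*} [NonUnitalRing A] [StarRing A] [Module ℂ A]
    [NonUnitalRing B] [StarRing B] [Module ℂ B] [Fintype ι] {ψ : A →ₗ[ℂ] Matrix ι ι ℂ}
    {χ : Matrix ι ι ℂ →ₗ[ℂ] B} (hψ : IsCPMap ψ) (hχ : IsCPMap χ) : IsFactorable (χ ∘ₗ ψ) := by
  classical
  let e : Matrix ι ι ℂ ≃⋆ₐ[ℂ] Matrix (Fin (Fintype.card ι)) (Fin (Fintype.card ι)) ℂ :=
    .ofAlgEquiv (reindexAlgEquiv ℂ ℂ (Fintype.equivFin ι))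
      fun M => (conjTranspose_reindex _ _ M).symm
  refine ⟨Fintype.card ι, (e : Matrix ι ι ℂ →ₗ[ℂ] _) ∘ₗ ψ,
    χ ∘ₗ (e.symm : Matrix (Fin (Fintype.card ι)) (Fin (Fintype.card ι)) ℂ →ₗ[ℂ] _),
    ?_, ?_, ?_⟩
  · exact hψ.starAlgEquiv_comp e
  · exact hχ.comp_starHom e.symm
  · ext x
    simp

/-- If `φ` is a factorable completely positive map, then for any `a₁,…,aₙ ∈ A`, `b₁,…,bₙ ∈ B`,
the map `x ↦ ∑ᵢⱼ bᵢ⋆ φ(aᵢ⋆ x aⱼ) bⱼ` is completely positive and factorable. -/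
theorem stmt_1 {A B : Type*} [NonUnitalCStarAlgebra A] [NonUnitalCStarAlgebra B]
    (φ : A →ₗ[ℂ] B) (hφcp : IsCPMap φ) (hφ : IsFactorable φ)
    (n : ℕ) (a : Fin n → A) (b : Fin n → B) (Ψ : A →ₗ[ℂ] B)
    (hΨ : ∀ x : A, Ψ x = ∑ i, ∑ j, star (b i) * φ (star (a i) * x * a j) * b j) :
    IsCPMap Ψ ∧ IsFactorable Ψ := by
  refine ⟨hφcp.sandwich a b hΨ, ?_⟩
  obtain ⟨k, ψ, χ, hψ, hχ, rfl⟩ := hφ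
  have hfac : Ψ = blockSumMap χ b ∘ₗ blockMatrixMap ψ a := by
    ext x
    simp [hΨ, blockSumMap, blockMatrixMap_submatrix]
  rw [hfac]
  exact isFactorable_comp (isCPMap_blockMatrixMap hψ a) (isCPMap_blockSumMap hχ b)
end
end

section
/- Let B be a C*-algebra with an action of a topological space X, and let D be any C*-algebra. If the action of X on B is finitely upper semicontinuous (B(∅)=0 and B(U)+B(V)=B(U∪V) for open U,V), then the induced action U ↦ B(U)⊗D on the spatial tensor product B⊗D is also finitely upper semicontinuous. -/
noncomputable section

open Filter Topology TopologicalSpace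

/-! Write `B(U) ⊗ D` for the closed ideal generated by elementary tensors. The inclusion
`B(U) ⊗ D + B(V) ⊗ D ⊆ B(U ∪ V) ⊗ D` is clear, and the reverse one holds because
`b ⊗ d = y ⊗ d + z ⊗ d` for `b = y + z`, provided the sum of two closed ideals of a C⋆-algebra
is again closed. For that, for `x ∈ I` the element `e = g(x⋆x)`, `g(t) = t² / (t² + s²)`, lies in
`I`, satisfies `‖a - a e‖ ≤ ‖a‖` and is a right approximate unit for `x`; so every `y ∈ J` is within
`dist(y, I)` of `I ∩ J`. Hence `J / (I ∩ J) → A / I` is isometric, its range is closed by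
completeness, and `I + J` is the preimage of that range. -/

namespace ClosedIdeal

variable {A : Type*} [NonUnitalNormedRing A] [Module ℂ A]

lemma subset_generated (S : Set A) : S ⊆ (generated S).carrier := by
  intro x hx
  simp only [generated, Set.mem_iInter]
  exact fun I hI => hI hx

lemma generated_subset {S : Set A} {I : ClosedIdeal A} (h : S ⊆ I.carrier) :
    (generated S).carrier ⊆ I.carrier := by
  intro x hx
  simp only [generated, Set.mem_iInter] at hx
  exact hx I h

def toSubmodule (I : ClosedIdeal A) : Submodule ℂ A where
  carrier := I.carrier
  zero_mem' := I.zero_mem'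
  add_mem' := I.add_mem'
  smul_mem' := I.smul_mem'

instance : Bot (ClosedIdeal A) where
  bot :=
    { carrier := {0}
      zero_mem' := rfl
      add_mem' := by rintro _ _ rfl rfl; exact add_zero 0
      smul_mem' := by rintro c _ rfl; exact smul_zero c
      mul_mem_left' := by rintro a _ rfl; exact mul_zero a
      mul_mem_right' := by rintro a _ rfl; exact zero_mul a
      isClosed' := isClosed_singleton }

end ClosedIdeal

lemma abs_mul_sq_div_sq_add_sq_le {s : ℝ} (hs : 0 < s) (t : ℝ) :
    |t| * (s ^ 2 / (t ^ 2 + s ^ 2)) ^ 2 ≤ s / 2 := by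
  rw [div_pow, mul_div_assoc', div_le_iff₀ (by positivity), ← sq_abs t]
  nlinarith [abs_nonneg t, mul_nonneg hs.le (mul_nonneg (sq_nonneg |t|) (sq_nonneg |t|)),
    mul_nonneg hs.le (mul_nonneg (sq_nonneg |t|) (sq_nonneg s)),
    mul_nonneg (mul_nonneg hs.le (sq_nonneg s)) (sq_nonneg (|t| - s))]

open Unitization CStarAlgebra in
lemma exists_norm_sub_mul_star_mul_self_mul_lt {A : Type*} [NonUnitalCStarAlgebra A] (x : A)
    {ε : ℝ} (hε : 0 < ε) : ∃ c : A, ‖x - x * (star x * x * c)‖ < ε ∧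
      ∀ a : A, ‖a - a * (star x * x * c)‖ ≤ ‖a‖ := by
  set b := star x * x
  set s := ε ^ 2
  have hs : 0 < s := by positivity
  have hden : ∀ t : ℝ, t ^ 2 + s ^ 2 ≠ 0 := fun t => by positivity
  set g : ℝ → ℝ := fun t => t ^ 2 / (t ^ 2 + s ^ 2)
  set h : ℝ → ℝ := fun t => t / (t ^ 2 + s ^ 2)
  have hg : Continuous g := by fun_prop (disch := exact hden _)
  have hh : Continuous h := by fun_prop (disch := exact hden _)
  refine ⟨cfcₙ h b, ?_⟩
  have he : ((b * cfcₙ h b : A) : A⁺¹) = cfc g (b : A⁺¹) := by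
    have : g = fun t => t * h t := by funext t; simp only [g, h]; ring
    rw [← Unitization.real_cfcₙ_eq_cfc_inr b g (by simp [g]), this,
      cfcₙ_mul (fun t : ℝ => t) h b (hf := continuousOn_id) (hg := hh.continuousOn),
      cfcₙ_id' ℝ b]
  have hu_cfc : (1 : A⁺¹) - cfc g (b : A⁺¹) = cfc (fun t => 1 - g t) (b : A⁺¹) := by
    rw [cfc_sub (fun _ => 1) g _ continuousOn_const hg.continuousOn, cfc_const_one ℝ _]
  set u : A⁺¹ := 1 - cfc g (b : A⁺¹)
  have hu : ∀ a : A, ((a - a * (b * cfcₙ h b) : A) : A⁺¹) = a * u := fun a => by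
    rw [inr_sub, inr_mul, he, mul_sub, mul_one]
  have hu_norm : ‖u‖ ≤ 1 := by
    rw [hu_cfc]
    refine norm_cfc_le zero_le_one fun t _ => ?_
    have : g t ≤ 1 := (div_le_one (by positivity)).mpr (by linarith [sq_nonneg s])
    rw [Real.norm_eq_abs, abs_le]
    constructor <;> linarith [show 0 ≤ g t by positivity]
  have hu_conj : star u * b * u = cfc (fun t => (1 - g t) * t * (1 - g t)) (b : A⁺¹) := by
    rw [hu_cfc, (cfc_predicate _ _ : IsSelfAdjoint _).star_eq, cfc_mul _ _ _ (by fun_prop)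
      (by fun_prop), cfc_mul _ (fun t : ℝ => t) _ (by fun_prop) (by fun_prop), cfc_id' ℝ (b : A⁺¹)]
  refine ⟨?_, fun a => ?_⟩
  · have hbound : ∀ t : ℝ, ‖(1 - g t) * t * (1 - g t)‖ ≤ s / 2 := fun t => by
      have : 1 - g t = s ^ 2 / (t ^ 2 + s ^ 2) := by
        simp only [g]; field_simp [hden t]; ring
      rw [this, Real.norm_eq_abs, abs_mul, abs_mul, abs_of_pos (by positivity : 0 < s ^ 2 / _)]
      linarith [abs_mul_sq_div_sq_add_sq_le hs t]
    have hsq : ‖(x : A⁺¹) * u‖ ^ 2 ≤ s / 2 := by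
      rw [sq, ← CStarRing.norm_star_mul_self, star_mul, ← inr_star, mul_assoc,
        ← mul_assoc (inr (star x)), ← inr_mul, ← mul_assoc, hu_conj]
      exact norm_cfc_le (by positivity) fun t _ => hbound t
    rw [← norm_inr (𝕜 := ℂ), hu]
    exact lt_of_pow_lt_pow_left₀ 2 hε.le (by linarith)
  · rw [← norm_inr (𝕜 := ℂ), hu]
    calc ‖(a : A⁺¹) * u‖ ≤ ‖(a : A⁺¹)‖ * ‖u‖ := norm_mul_le _ _
      _ ≤ ‖a‖ := by rw [norm_inr]; exact mul_le_of_le_one_right (norm_nonneg _) hu_norm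

section CStarAlgebra

variable {A : Type*} [NonUnitalCStarAlgebra A]

lemma ClosedIdeal.exists_mem_inf_norm_sub_le (I J : ClosedIdeal A) {x y : A} (hx : x ∈ I.carrier)
    (hy : y ∈ J.carrier) {ε : ℝ} (hε : 0 < ε) :
    ∃ z ∈ I.carrier ∩ J.carrier, ‖y - z‖ ≤ ‖x + y‖ + ε := by
  obtain ⟨c, hsmall, hcontr⟩ := exists_norm_sub_mul_star_mul_self_mul_lt x hε
  set e := star x * x * c
  have heI : e ∈ I.carrier := I.mul_mem_right' c (I.mul_mem_left' (star x) hx)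
  refine ⟨y * e, ⟨I.mul_mem_left' y heI, J.mul_mem_right' e hy⟩, ?_⟩
  calc ‖y - y * e‖ = ‖((x + y) - (x + y) * e) - (x - x * e)‖ := by congr 1; noncomm_ring
    _ ≤ ‖(x + y) - (x + y) * e‖ + ‖x - x * e‖ := norm_sub_le _ _
    _ ≤ ‖x + y‖ + ε := add_le_add (hcontr (x + y)) hsmall.le

lemma ClosedIdeal.isClosed_add (I J : ClosedIdeal A) :
    IsClosed {t : A | ∃ y ∈ I.carrier, ∃ z ∈ J.carrier, t = y + z} := by
  let I' := I.toSubmodule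
  let J' := J.toSubmodule
  have : IsClosed (I' : Set A) := I.isClosed'
  have : CompleteSpace J' := J.isClosed'.completeSpace_coe
  let φ : J' →ₗ[ℂ] A ⧸ I' := I'.mkQ ∘ₗ J'.subtype
  let ψ : J' ⧸ LinearMap.ker φ →ₗ[ℂ] A ⧸ I' := (LinearMap.ker φ).liftQ φ le_rfl
  have hψ : Isometry ψ := by
    refine AddMonoidHomClass.isometry_of_norm ψ fun q => ?_
    obtain ⟨y, rfl⟩ := Submodule.Quotient.mk_surjective _ q
    refine le_antisymm (le_of_forall_pos_lt_add fun ε hε => ?_)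
      (le_of_forall_pos_lt_add fun ε hε => ?_)
    · obtain ⟨m, hm, hlt⟩ := Submodule.Quotient.norm_mk_lt
        (Submodule.Quotient.mk y : J' ⧸ LinearMap.ker φ) hε
      calc ‖ψ (Submodule.Quotient.mk y)‖ = ‖ψ (Submodule.Quotient.mk m)‖ := by rw [hm]
        _ ≤ ‖m‖ := Submodule.Quotient.norm_mk_le I' (m : A)
        _ < _ := hlt
    · obtain ⟨a, ha, hlt⟩ :=
        Submodule.Quotient.norm_mk_lt (ψ (Submodule.Quotient.mk y)) (half_pos hε)
      have hx : a - y ∈ I.carrier := (Submodule.Quotient.eq I').mp ha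
      obtain ⟨z, ⟨hzI, hzJ⟩, hz⟩ := I.exists_mem_inf_norm_sub_le J hx y.2 (half_pos hε)
      have hker : (⟨z, hzJ⟩ : J') ∈ LinearMap.ker φ := (Submodule.Quotient.mk_eq_zero I').mpr hzI
      have hq : (Submodule.Quotient.mk y : J' ⧸ LinearMap.ker φ) =
          Submodule.Quotient.mk (y - ⟨z, hzJ⟩) :=
        (Submodule.Quotient.eq _).mpr (by simpa using hker)
      calc ‖(Submodule.Quotient.mk y : J' ⧸ LinearMap.ker φ)‖ ≤ ‖(y : A) - z‖ :=
            hq ▸ Submodule.Quotient.norm_mk_le _ _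
        _ ≤ ‖a‖ + ε / 2 := by simpa using hz
        _ < _ := by linarith
  have hrange : IsClosed (Set.range ψ) := hψ.antilipschitz.isClosed_range hψ.uniformContinuous
  convert hrange.preimage (continuous_quot_mk : Continuous I'.mkQ) using 1
  ext t
  constructor
  · rintro ⟨y, hy, z, hz, rfl⟩
    refine ⟨Submodule.Quotient.mk ⟨z, hz⟩, (Submodule.Quotient.eq I').mpr ?_⟩
    simpa using I'.neg_mem hy
  · rintro ⟨q, hq⟩
    obtain ⟨⟨z, hz⟩, rfl⟩ := Submodule.Quotient.mk_surjective _ q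
    exact ⟨t - z, (Submodule.Quotient.eq I').mp hq.symm, z, hz, by abel⟩

def ClosedIdeal.sup (I J : ClosedIdeal A) : ClosedIdeal A where
  carrier := {t : A | ∃ y ∈ I.carrier, ∃ z ∈ J.carrier, t = y + z}
  zero_mem' := ⟨0, I.zero_mem', 0, J.zero_mem', (add_zero 0).symm⟩
  add_mem' := by
    rintro _ _ ⟨y₁, hy₁, z₁, hz₁, rfl⟩ ⟨y₂, hy₂, z₂, hz₂, rfl⟩
    exact ⟨y₁ + y₂, I.add_mem' hy₁ hy₂, z₁ + z₂, J.add_mem' hz₁ hz₂, add_add_add_comm _ _ _ _⟩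
  smul_mem' := by
    rintro c _ ⟨y, hy, z, hz, rfl⟩
    exact ⟨c • y, I.smul_mem' c hy, c • z, J.smul_mem' c hz, smul_add c y z⟩
  mul_mem_left' := by
    rintro a _ ⟨y, hy, z, hz, rfl⟩
    exact ⟨a * y, I.mul_mem_left' a hy, a * z, J.mul_mem_left' a hz, mul_add a y z⟩
  mul_mem_right' := by
    rintro a _ ⟨y, hy, z, hz, rfl⟩
    exact ⟨y * a, I.mul_mem_right' a hy, z * a, J.mul_mem_right' a hz, add_mul y z a⟩
  isClosed' := I.isClosed_add J

end CStarAlgebra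

namespace CStarTensor

variable {B D T : Type*} [NonUnitalCStarAlgebra B] [NonUnitalCStarAlgebra D]
  [NonUnitalCStarAlgebra T] (τ : CStarTensor B D T)

lemma tensorIdeal_mono {I J : ClosedIdeal B} (h : I.carrier ⊆ J.carrier) :
    (τ.tensorIdeal I).carrier ⊆ (τ.tensorIdeal J).carrier :=
  ClosedIdeal.generated_subset fun _ ⟨b, hb, d, ht⟩ =>
    ClosedIdeal.subset_generated _ ⟨b, h hb, d, ht⟩

lemma tensorIdeal_eq_zero {J : ClosedIdeal B} (hJ : J.carrier = {0}) :
    (τ.tensorIdeal J).carrier = {0} := by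
  refine subset_antisymm (ClosedIdeal.generated_subset (I := ⊥) ?_) (by
    rintro _ rfl; exact (τ.tensorIdeal J).zero_mem')
  rintro _ ⟨b, hb, d, rfl⟩
  rw [hJ] at hb
  rw [hb, map_zero, LinearMap.zero_apply]
  rfl

lemma tensorIdeal_eq_add {I J K : ClosedIdeal B}
    (hK : K.carrier = {x : B | ∃ y ∈ I.carrier, ∃ z ∈ J.carrier, x = y + z}) :
    (τ.tensorIdeal K).carrier = {t : T | ∃ y ∈ (τ.tensorIdeal I).carrier,
      ∃ z ∈ (τ.tensorIdeal J).carrier, t = y + z} := by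
  refine subset_antisymm
    (ClosedIdeal.generated_subset (I := (τ.tensorIdeal I).sup (τ.tensorIdeal J)) ?_) ?_
  · rintro _ ⟨b, hb, d, rfl⟩
    rw [hK] at hb
    obtain ⟨y, hy, z, hz, rfl⟩ := hb
    refine ⟨τ.ι y d, ClosedIdeal.subset_generated _ ⟨y, hy, d, rfl⟩,
      τ.ι z d, ClosedIdeal.subset_generated _ ⟨z, hz, d, rfl⟩, ?_⟩
    rw [map_add, LinearMap.add_apply]
  · have hIK : I.carrier ⊆ K.carrier := fun y hy =>
      hK ▸ ⟨y, hy, 0, J.zero_mem', (add_zero y).symm⟩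
    have hJK : J.carrier ⊆ K.carrier := fun z hz =>
      hK ▸ ⟨0, I.zero_mem', z, hz, (zero_add z).symm⟩
    rintro _ ⟨y, hy, z, hz, rfl⟩
    exact (τ.tensorIdeal K).add_mem' (τ.tensorIdeal_mono hIK hy) (τ.tensorIdeal_mono hJK hz)

end CStarTensor

theorem stmt_3_general {X : Type*} [TopologicalSpace X] {B D T : Type*}
    [NonUnitalCStarAlgebra B] [NonUnitalCStarAlgebra D] [NonUnitalCStarAlgebra T]
    (τ : CStarTensor B D T) (α : Opens X → ClosedIdeal B)
    (hbot : (α ⊥).carrier = {0})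
    (hsum : ∀ U V : Opens X, (α (U ⊔ V)).carrier =
      {x : B | ∃ y ∈ (α U).carrier, ∃ z ∈ (α V).carrier, x = y + z}) :
    (τ.tensorIdeal (α ⊥)).carrier = {0} ∧
      ∀ U V : Opens X, (τ.tensorIdeal (α (U ⊔ V))).carrier =
        {t : T | ∃ y ∈ (τ.tensorIdeal (α U)).carrier,
          ∃ z ∈ (τ.tensorIdeal (α V)).carrier, t = y + z} :=
  ⟨τ.tensorIdeal_eq_zero hbot, fun U V => τ.tensorIdeal_eq_add (hsum U V)⟩

/-- If the action of `X` on `B` is finitely upper semicontinuous, so is the induced action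
`U ↦ B(U) ⊗ D` on the spatial tensor product `B ⊗ D`. -/
theorem stmt_3 {X : Type*} [TopologicalSpace X] {B D T : Type*}
    [NonUnitalCStarAlgebra B] [NonUnitalCStarAlgebra D] [NonUnitalCStarAlgebra T]
    (τ : CStarTensor B D T) (α : Opens X → ClosedIdeal B)
    (hmono : ∀ U V : Opens X, U ≤ V → (α U).carrier ⊆ (α V).carrier)
    (hbot : (α ⊥).carrier = {0})
    (hsum : ∀ U V : Opens X, (α (U ⊔ V)).carrier =
      {x : B | ∃ y ∈ (α U).carrier, ∃ z ∈ (α V).carrier, x = y + z}) :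
    (τ.tensorIdeal (α ⊥)).carrier = {0} ∧
      ∀ U V : Opens X, (τ.tensorIdeal (α (U ⊔ V))).carrier =
        {t : T | ∃ y ∈ (τ.tensorIdeal (α U)).carrier,
          ∃ z ∈ (τ.tensorIdeal (α V)).carrier, t = y + z} :=
  stmt_3_general τ α hbot hsum
end
end
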